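/- Let μ be a positive Borel measure on ℂ, finite on compact sets, satisfying the Blaschke condition near infinity in the upper half-plane, with balayage μ^bal. (1) If g : (0,∞) → (0,∞) satisfies g(r) > r for all r > 0, then for every r > 0 one has μ^bal({z : |z| ≤ r}) ≤ μ({z : |z| ≤ g(r)}) + (2·r·g(r)²/(π·(g(r) − r)²)) · ∫_{{|z| ≥ g(r)}} |Im z|/|z|² dμ(z). (2) If limsup_{r→∞} μ({z : |z| ≤ r})/r^p < ∞ for some p ≥ 0, then limsup_{r→∞} μ^bal({z : |z| ≤ r})/r^p < ∞; and if p ≥ 1 one has the sharp estimate limsup_{r→∞} μ^bal({z : |z| ≤ r})/r^p ≤ limsup_{r→∞} μ({z : |z| ≤ r})/r^p. -/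

import Mathlib

/-!
The harmonic measure of the disc `|w| ≤ r` seen from `z` in the upper half-plane is at most `1`,
and for `|z| ≥ g > r` it is at most `2r g² / (π (g - r)²) · Im z / |z|²`, since the Poisson
kernel is `Im z / (π |z - t|²)` and `|z - t| ≥ (1 - r/g)|z|` for `|t| ≤ r`. Splitting the upper
half-plane at `|z| = g` gives (1).

For (2) take `g(r) = c r`. If `p ≥ 1`, the Blaschke condition makes the tail
`∫_{|z| ≥ cr} Im z / |z|² dμ` tend to `0`, so the second term of (1) is `o(r) = o(rᵖ)` and the type
of `μ^bal` is at most `cᵖ` times that of `μ`, for every `c > 1`. If `p < 1`, the growth of `μ`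
alone bounds the tail by `O(r^(p-1))`, summing over the dyadic shells `2ᵏ r ≤ |z| ≤ 2ᵏ⁺¹ r`.
-/

open MeasureTheory Filter Set
open scoped ENNReal

/-- The Poisson kernel of the upper half-plane at `z`, evaluated at `t ∈ ℝ`. -/
noncomputable def poisson (z : ℂ) (t : ℝ) : ℝ :=
  (1 / Real.pi) * z.im / ((t - z.re) ^ 2 + z.im ^ 2)

/-- The harmonic measure `ω(z,B)` of a Borel set `B ⊆ ℂ` at a point `z` of the upper
half-plane: the integral of the Poisson kernel over the real trace of `B`. -/
noncomputable def omegaUHP (z : ℂ) (B : Set ℂ) : ℝ :=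
  ∫ t in {t : ℝ | (t : ℂ) ∈ B}, poisson z t

/-- The balayage of a positive measure `μ` on `ℂ` out of the upper half-plane, as a set
function: `μ^bal(B) = ∫_{Im z>0} ω(z,B) dμ(z) + μ(B ∩ {Im z ≤ 0})`. -/
noncomputable def balUHP (μ : Measure ℂ) (B : Set ℂ) : ℝ≥0∞ :=
  (∫⁻ z in {z : ℂ | 0 < z.im}, ENNReal.ofReal (omegaUHP z B) ∂μ)
    + μ (B ∩ {z : ℂ | z.im ≤ 0})

open Topology

section Poisson

variable {z : ℂ}

lemma poisson_eq_cauchyPDFReal (hz : 0 ≤ z.im) :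
    poisson z = ProbabilityTheory.cauchyPDFReal z.re z.im.toNNReal := by
  ext t
  rw [ProbabilityTheory.cauchyPDFReal_def, poisson, Real.coe_toNNReal _ hz]
  ring

lemma poisson_nonneg (hz : 0 ≤ z.im) (t : ℝ) : 0 ≤ poisson z t := by
  unfold poisson; positivity

lemma poisson_eq_im_div_normSq (z : ℂ) (t : ℝ) :
    poisson z t = z.im / (Real.pi * Complex.normSq (z - t)) := by
  simp only [poisson, div_eq_mul_inv, mul_inv, Complex.normSq_apply, Complex.sub_re,
    Complex.ofReal_re, Complex.sub_im, Complex.ofReal_im, sub_zero]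
  ring

lemma omegaUHP_le_one (hz : 0 < z.im) (B : Set ℂ) : omegaUHP z B ≤ 1 := by
  have hint := ProbabilityTheory.integral_cauchyPDFReal_eq_one z.re
    (Real.toNNReal_pos.2 hz).ne'
  rw [← poisson_eq_cauchyPDFReal hz.le] at hint
  rw [omegaUHP, ← hint]
  exact setIntegral_le_integral (by rw [poisson_eq_cauchyPDFReal hz.le]; fun_prop)
    (.of_forall (poisson_nonneg hz.le))

lemma poisson_le_of_le_norm (hz : 0 ≤ z.im) {r g t : ℝ} (hr : 0 ≤ r) (hg : r < g)
    (hzg : g ≤ ‖z‖) (ht : |t| ≤ r) :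
    poisson z t ≤ g ^ 2 / (Real.pi * (g - r) ^ 2) * (z.im / ‖z‖ ^ 2) := by
  have hz0 : 0 < ‖z‖ := (hr.trans_lt hg).trans_le hzg
  have hdist : (g - r) * ‖z‖ ≤ g * ‖z - t‖ := by
    have := norm_sub_norm_le z (t : ℂ)
    rw [Complex.norm_real, Real.norm_eq_abs] at this
    nlinarith
  have hsq : ((g - r) * ‖z‖) ^ 2 ≤ (g * ‖z - t‖) ^ 2 :=
    pow_le_pow_left₀ (mul_nonneg (by linarith) hz0.le) hdist 2
  rw [poisson_eq_im_div_normSq, ← Complex.sq_norm]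
  have hgr : 0 < g - r := by linarith
  have hzt : 0 < ‖z - t‖ := pos_of_mul_pos_right ((mul_pos hgr hz0).trans_le hdist) (by linarith)
  rw [div_mul_div_comm, div_le_div_iff₀ (by positivity) (by positivity)]
  nlinarith [mul_le_mul_of_nonneg_left hsq (mul_nonneg Real.pi_pos.le hz)]

lemma omegaUHP_closedBall_le (hz : 0 ≤ z.im) {r g : ℝ} (hr : 0 ≤ r) (hg : r < g)
    (hzg : g ≤ ‖z‖) :
    omegaUHP z {w : ℂ | ‖w‖ ≤ r}
      ≤ 2 * r * g ^ 2 / (Real.pi * (g - r) ^ 2) * (z.im / ‖z‖ ^ 2) := by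
  have htrace : {t : ℝ | (t : ℂ) ∈ {w : ℂ | ‖w‖ ≤ r}} = Icc (-r) r := by
    ext t; simp [abs_le]
  have hbound := norm_setIntegral_le_of_norm_le_const (μ := volume) (f := poisson z)
    (by simp : volume (Icc (-r) r) < ⊤) fun t ht => by
      rw [Real.norm_eq_abs, abs_of_nonneg (poisson_nonneg hz t)]
      exact poisson_le_of_le_norm hz hr hg hzg (abs_le.2 ht)
  rw [omegaUHP, htrace]
  refine (le_abs_self _).trans (hbound.trans_eq ?_)
  rw [Real.volume_real_Icc_of_le (by linarith)]
  ring

end Poisson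

noncomputable def blaschkeTail (μ : Measure ℂ) (R : ℝ) : ℝ≥0∞ :=
  ∫⁻ z in {z : ℂ | 0 < z.im ∧ R ≤ ‖z‖}, ENNReal.ofReal (z.im / ‖z‖ ^ 2) ∂μ

lemma measurableSet_upperHalfPlane : MeasurableSet {z : ℂ | 0 < z.im} :=
  measurableSet_lt measurable_const Complex.measurable_im

theorem balUHP_closedBall_le (μ : Measure ℂ) {r g : ℝ} (hr : 0 ≤ r) (hg : r < g) :
    balUHP μ {z : ℂ | ‖z‖ ≤ r} ≤ μ {z : ℂ | ‖z‖ ≤ g}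
      + ENNReal.ofReal (2 * r * g ^ 2 / (Real.pi * (g - r) ^ 2)) * blaschkeTail μ g := by
  set C := ENNReal.ofReal (2 * r * g ^ 2 / (Real.pi * (g - r) ^ 2))
  set ω := fun z => ENNReal.ofReal (omegaUHP z {w : ℂ | ‖w‖ ≤ r})
  set near := {z : ℂ | 0 < z.im ∧ ‖z‖ ≤ g}
  set far := {z : ℂ | 0 < z.im ∧ g ≤ ‖z‖}
  set lower := {z : ℂ | ‖z‖ ≤ r} ∩ {z : ℂ | z.im ≤ 0}
  have hnear : ∫⁻ z in near, ω z ∂μ ≤ μ near :=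
    calc ∫⁻ z in near, ω z ∂μ ≤ ∫⁻ _ in near, 1 ∂μ :=
          setLIntegral_mono' (measurableSet_upperHalfPlane.inter
            (measurableSet_le measurable_norm measurable_const))
            fun z hz => ENNReal.ofReal_le_one.2 (omegaUHP_le_one hz.1 _)
      _ = μ near := setLIntegral_one _
  have hfar : ∫⁻ z in far, ω z ∂μ ≤ C * blaschkeTail μ g := by
    rw [blaschkeTail, ← lintegral_const_mul' _ _ ENNReal.ofReal_ne_top]
    refine setLIntegral_mono' (measurableSet_upperHalfPlane.inter
      (measurableSet_le measurable_const measurable_norm)) fun z hz => ?_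
    rw [← ENNReal.ofReal_mul (by have := hr.trans_lt hg; positivity)]
    exact ENNReal.ofReal_le_ofReal (omegaUHP_closedBall_le hz.1.le hr hg hz.2)
  have hsplit : μ near + μ lower ≤ μ {z : ℂ | ‖z‖ ≤ g} := by
    rw [← measure_union (disjoint_left.2 fun z h₁ h₂ => h₂.2.not_gt h₁.1)
      ((measurableSet_le measurable_norm measurable_const).inter
        (measurableSet_le Complex.measurable_im measurable_const))]
    exact measure_mono (union_subset (fun z hz => hz.2) fun z hz => hz.1.trans hg.le)
  calc balUHP μ {z : ℂ | ‖z‖ ≤ r}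
      ≤ (∫⁻ z in near, ω z ∂μ + ∫⁻ z in far, ω z ∂μ) + μ lower := by
        refine add_le_add_left ((lintegral_mono_set fun z hz => ?_).trans
          (lintegral_union_le _ _ _)) _
        exact (le_total ‖z‖ g).imp (⟨hz, ·⟩) (⟨hz, ·⟩)
    _ ≤ (μ near + C * blaschkeTail μ g) + μ lower := by gcongr
    _ ≤ μ {z : ℂ | ‖z‖ ≤ g} + C * blaschkeTail μ g := by
        rw [add_right_comm]; gcongr

lemma blaschkeTail_le_setLIntegral_abs_im (μ : Measure ℂ) (R : ℝ) :
    blaschkeTail μ R ≤ ∫⁻ z in {z : ℂ | R ≤ ‖z‖}, ENNReal.ofReal (|z.im| / ‖z‖ ^ 2) ∂μ :=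
  (lintegral_mono fun _ => ENNReal.ofReal_le_ofReal
    (div_le_div_of_nonneg_right (le_abs_self _) (sq_nonneg _))).trans
    (lintegral_mono_set fun _ hz => hz.2)

section Tails

variable {E : Type*} [NormedAddCommGroup E] [MeasurableSpace E] [OpensMeasurableSpace E]
  {ν : Measure E}

theorem tendsto_setLIntegral_norm_ge_atTop {f : E → ℝ≥0∞}
    (h : ∃ R₀ : ℝ, ∫⁻ z in {z | R₀ ≤ ‖z‖}, f z ∂ν ≠ ⊤) :
    Tendsto (fun R : ℝ => ∫⁻ z in {z | R ≤ ‖z‖}, f z ∂ν) atTop (𝓝 0) := by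
  have hmeas (R : ℝ) : MeasurableSet {z : E | R ≤ ‖z‖} :=
    measurableSet_le measurable_const measurable_norm
  have hdensity (R : ℝ) : ∫⁻ z in {z | R ≤ ‖z‖}, f z ∂ν = ν.withDensity f {z | R ≤ ‖z‖} :=
    (withDensity_apply _ (hmeas R)).symm
  have hempty : ⋂ R : ℝ, {z : E | R ≤ ‖z‖} = ∅ :=
    eq_empty_of_forall_notMem fun z hz => (lt_add_one ‖z‖).not_ge (mem_iInter.1 hz (‖z‖ + 1))
  simp only [hdensity] at h ⊢
  simpa [hempty, Function.comp_def] using tendsto_measure_iInter_atTop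
    (fun R => (hmeas R).nullMeasurableSet) (fun R S hRS z hz => hRS.trans hz) h

/-- The sum over the shells `2ᵏR ≤ |z| ≤ 2ᵏ⁺¹R` is a geometric series of ratio `2 ^ (p - 1)`;
for `p ≥ 1` the right-hand side is `⊤`. -/
theorem ofReal_mul_setLIntegral_inv_norm_le {p R : ℝ} {C : ℝ≥0∞} (hR : 0 < R)
    (hν : ∀ s, R ≤ s → ν {z | ‖z‖ ≤ s} ≤ C * ENNReal.ofReal (s ^ p)) :
    ENNReal.ofReal R * ∫⁻ z in {z | R ≤ ‖z‖}, ENNReal.ofReal ‖z‖⁻¹ ∂ν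
      ≤ C * ENNReal.ofReal (2 ^ p) * (1 - ENNReal.ofReal (2 ^ (p - 1)))⁻¹
        * ENNReal.ofReal (R ^ p) := by
  set shell : ℕ → Set E := fun k => {z | 2 ^ k * R ≤ ‖z‖ ∧ ‖z‖ ≤ 2 ^ (k + 1) * R}
  have hcover : {z : E | R ≤ ‖z‖} ⊆ ⋃ k, shell k := fun z hz => by
    obtain ⟨k, hk₁, hk₂⟩ := exists_nat_pow_near ((one_le_div hR).2 hz) one_lt_two
    exact mem_iUnion.2 ⟨k, (le_div_iff₀ hR).1 hk₁, ((div_lt_iff₀ hR).1 hk₂).le⟩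
  have hscale (k : ℕ) : R * (2 ^ k * R)⁻¹ * (2 ^ (k + 1) * R) ^ p
      = 2 ^ p * R ^ p * (2 ^ (p - 1)) ^ k := by
    rw [Real.mul_rpow (by positivity) hR.le, ← Real.rpow_pow_comm zero_le_two,
      Real.rpow_sub_one two_ne_zero, div_pow]
    field_simp
    ring
  have hshell (k : ℕ) : ENNReal.ofReal R * ∫⁻ z in shell k, ENNReal.ofReal ‖z‖⁻¹ ∂ν
      ≤ C * ENNReal.ofReal (2 ^ p * R ^ p) * ENNReal.ofReal (2 ^ (p - 1)) ^ k := by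
    have hk : 0 < 2 ^ k * R := by positivity
    have hmeas : MeasurableSet (shell k) :=
      (measurableSet_le measurable_const measurable_norm).inter
        (measurableSet_le measurable_norm measurable_const)
    calc ENNReal.ofReal R * ∫⁻ z in shell k, ENNReal.ofReal ‖z‖⁻¹ ∂ν
        ≤ ENNReal.ofReal R * ∫⁻ _ in shell k, ENNReal.ofReal (2 ^ k * R)⁻¹ ∂ν := by
          exact mul_le_mul_right (setLIntegral_mono' hmeas
            fun z hz => ENNReal.ofReal_le_ofReal (inv_anti₀ hk hz.1)) _
      _ ≤ ENNReal.ofReal (R * (2 ^ k * R)⁻¹) * (C * ENNReal.ofReal ((2 ^ (k + 1) * R) ^ p)) := by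
          rw [setLIntegral_const, ← mul_assoc, ← ENNReal.ofReal_mul hR.le]
          gcongr
          exact (measure_mono fun z hz => hz.2).trans
            (hν _ (le_mul_of_one_le_left hR.le (one_le_pow₀ one_le_two)))
      _ = C * ENNReal.ofReal (2 ^ p * R ^ p) * ENNReal.ofReal (2 ^ (p - 1)) ^ k := by
          rw [← ENNReal.ofReal_pow (by positivity), mul_left_comm, mul_assoc C,
            ← ENNReal.ofReal_mul (by positivity), ← ENNReal.ofReal_mul (by positivity), hscale]
  calc ENNReal.ofReal R * ∫⁻ z in {z | R ≤ ‖z‖}, ENNReal.ofReal ‖z‖⁻¹ ∂ν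
      ≤ ENNReal.ofReal R * ∑' k, ∫⁻ z in shell k, ENNReal.ofReal ‖z‖⁻¹ ∂ν := by
        gcongr
        exact (lintegral_mono_set hcover).trans (lintegral_iUnion_le _ _)
    _ = ∑' k, ENNReal.ofReal R * ∫⁻ z in shell k, ENNReal.ofReal ‖z‖⁻¹ ∂ν :=
        ENNReal.tsum_mul_left.symm
    _ ≤ ∑' k, C * ENNReal.ofReal (2 ^ p * R ^ p) * ENNReal.ofReal (2 ^ (p - 1)) ^ k :=
        ENNReal.tsum_le_tsum hshell
    _ = _ := by
        rw [ENNReal.tsum_mul_left, ENNReal.tsum_geometric, ENNReal.ofReal_mul (by positivity)]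
        ring

end Tails

lemma im_div_norm_sq_le_inv_norm (z : ℂ) : z.im / ‖z‖ ^ 2 ≤ ‖z‖⁻¹ := by
  rcases (norm_nonneg z).eq_or_lt with hz | hz
  · simp [← hz]
  · rw [div_le_iff₀ (by positivity), sq, ← mul_assoc, inv_mul_cancel₀ hz.ne', one_mul]
    exact (le_abs_self _).trans (Complex.abs_im_le_norm z)

lemma blaschkeTail_le_setLIntegral_inv_norm (μ : Measure ℂ) (R : ℝ) :
    blaschkeTail μ R ≤ ∫⁻ z in {z : ℂ | R ≤ ‖z‖}, ENNReal.ofReal ‖z‖⁻¹ ∂μ :=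
  (lintegral_mono fun z => ENNReal.ofReal_le_ofReal (im_div_norm_sq_le_inv_norm z)).trans
    (lintegral_mono_set fun _ hz => hz.2)

theorem tendsto_blaschkeTail_atTop {μ : Measure ℂ} (h : ∃ R₀ : ℝ, blaschkeTail μ R₀ ≠ ⊤) :
    Tendsto (blaschkeTail μ) atTop (𝓝 0) := by
  have hrestrict (R : ℝ) : blaschkeTail μ R = ∫⁻ z in {z | R ≤ ‖z‖},
      ENNReal.ofReal (z.im / ‖z‖ ^ 2) ∂μ.restrict {z : ℂ | 0 < z.im} := by
    rw [blaschkeTail, Measure.restrict_restrict (measurableSet_le measurable_const measurable_norm),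
      inter_comm]
    rfl
  simp only [hrestrict] at h
  rw [funext hrestrict]
  exact tendsto_setLIntegral_norm_ge_atTop h

noncomputable def growthType (F : ℝ → ℝ≥0∞) (p : ℝ) : ℝ≥0∞ :=
  limsup (fun r => F r / ENNReal.ofReal (r ^ p)) atTop

section GrowthType

variable {F G : ℝ → ℝ≥0∞} {p : ℝ}

lemma growthType_mono (h : F ≤ᶠ[atTop] G) : growthType F p ≤ growthType G p :=
  limsup_le_limsup (h.mono fun _ hr => ENNReal.div_le_div_right hr _)

lemma growthType_add_le : growthType (F + G) p ≤ growthType F p + growthType G p := by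
  refine ENNReal.le_of_forall_pos_le_add fun ε hε hfin => ?_
  obtain ⟨hF, hG⟩ := ENNReal.add_lt_top.1 hfin
  have hε₂ : (ε / 2 : ℝ≥0∞) ≠ 0 := by simpa using hε.ne'
  refine limsup_le_of_le (by isBoundedDefault) ?_
  filter_upwards [eventually_lt_of_limsup_lt (ENNReal.lt_add_right hF.ne hε₂),
    eventually_lt_of_limsup_lt (ENNReal.lt_add_right hG.ne hε₂)] with r hFr hGr
  calc (F + G) r / ENNReal.ofReal (r ^ p)
      = F r / ENNReal.ofReal (r ^ p) + G r / ENNReal.ofReal (r ^ p) := ENNReal.add_div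
    _ ≤ (growthType F p + ε / 2) + (growthType G p + ε / 2) := add_le_add hFr.le hGr.le
    _ = growthType F p + growthType G p + ε := by rw [add_add_add_comm, ENNReal.add_halves]

lemma growthType_le_of_eventually_le {C : ℝ≥0∞}
    (h : ∀ᶠ r in atTop, F r ≤ C * ENNReal.ofReal (r ^ p)) : growthType F p ≤ C :=
  limsup_le_of_le (by isBoundedDefault) (h.mono fun _ hr => ENNReal.div_le_of_le_mul hr)

lemma eventually_le_of_growthType_lt {C : ℝ≥0∞} (h : growthType F p < C) :
    ∀ᶠ r in atTop, F r ≤ C * ENNReal.ofReal (r ^ p) :=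
  (eventually_lt_of_limsup_lt h).mp <| (eventually_gt_atTop 0).mono fun r hr₀ hr =>
    (ENNReal.div_le_iff (ENNReal.ofReal_pos.2 (Real.rpow_pos_of_pos hr₀ p)).ne'
      ENNReal.ofReal_ne_top).1 hr.le

lemma growthType_comp_mul_le {c : ℝ} (hc : 0 < c) :
    growthType (fun r => F (c * r)) p ≤ ENNReal.ofReal (c ^ p) * growthType F p := by
  have hscale : (fun r => F (c * r) / ENNReal.ofReal (r ^ p)) =ᶠ[atTop]
      fun r => ENNReal.ofReal (c ^ p) * (F (c * r) / ENNReal.ofReal ((c * r) ^ p)) := by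
    filter_upwards [eventually_gt_atTop 0] with r hr
    rw [Real.mul_rpow hc.le hr.le, ENNReal.ofReal_mul (by positivity), ← mul_div_assoc,
      ENNReal.mul_div_mul_left _ _ (ENNReal.ofReal_pos.2 (by positivity)).ne'
        ENNReal.ofReal_ne_top]
  rw [growthType, limsup_congr hscale, ENNReal.limsup_const_mul_of_ne_top ENNReal.ofReal_ne_top]
  exact mul_le_mul_right ((tendsto_id.const_mul_atTop hc).limsup_comp_le_limsup
    (u := fun s => F s / ENNReal.ofReal (s ^ p))) _

lemma growthType_ofReal_mul_eq_zero (hp : 1 ≤ p) {T : ℝ → ℝ≥0∞}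
    (hT : Tendsto T atTop (𝓝 0)) : growthType (fun r => ENNReal.ofReal r * T r) p = 0 := by
  refine nonpos_iff_eq_zero.1 ((limsup_le_limsup ?_).trans hT.limsup_eq.le)
  filter_upwards [eventually_ge_atTop 1] with r hr
  refine ENNReal.div_le_of_le_mul ?_
  rw [mul_comm]
  gcongr
  exact Real.self_le_rpow_of_one_le hr hp

end GrowthType

section Growth

variable {μ : Measure ℂ} {p : ℝ}

theorem growthType_balUHP_le_mul (hB : ∃ R₀ : ℝ, blaschkeTail μ R₀ ≠ ⊤) (hp : 1 ≤ p) {c : ℝ}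
    (hc : 1 < c) :
    growthType (fun r => balUHP μ {z : ℂ | ‖z‖ ≤ r}) p
      ≤ ENNReal.ofReal (c ^ p) * growthType (fun r => μ {z : ℂ | ‖z‖ ≤ r}) p := by
  set K := 2 * c ^ 2 / (Real.pi * (c - 1) ^ 2)
  have hbal (r : ℝ) (hr : 0 < r) : balUHP μ {z : ℂ | ‖z‖ ≤ r} ≤ μ {z : ℂ | ‖z‖ ≤ c * r}
      + ENNReal.ofReal r * (ENNReal.ofReal K * blaschkeTail μ (c * r)) := by
    refine (balUHP_closedBall_le μ hr.le (lt_mul_left hr hc)).trans_eq ?_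
    rw [← mul_assoc, ← ENNReal.ofReal_mul hr.le, show c * r - r = (c - 1) * r by ring]
    have hc₁ : c - 1 ≠ 0 := by linarith
    congr 3
    simp only [K]
    field_simp
  have htail : Tendsto (fun r => ENNReal.ofReal K * blaschkeTail μ (c * r)) atTop (𝓝 0) := by
    simpa using ENNReal.Tendsto.const_mul ((tendsto_blaschkeTail_atTop hB).comp
      (tendsto_id.const_mul_atTop (by linarith))) (Or.inr ENNReal.ofReal_ne_top)
  calc growthType (fun r => balUHP μ {z : ℂ | ‖z‖ ≤ r}) p
      ≤ growthType ((fun r => μ {z : ℂ | ‖z‖ ≤ c * r})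
          + fun r => ENNReal.ofReal r * (ENNReal.ofReal K * blaschkeTail μ (c * r))) p :=
        growthType_mono ((eventually_gt_atTop 0).mono hbal)
    _ ≤ ENNReal.ofReal (c ^ p) * growthType (fun r => μ {z : ℂ | ‖z‖ ≤ r}) p + 0 :=
        growthType_add_le.trans (add_le_add
          (growthType_comp_mul_le (F := fun s => μ {z : ℂ | ‖z‖ ≤ s}) (by linarith))
          (growthType_ofReal_mul_eq_zero hp htail).le)
    _ = _ := add_zero _

theorem growthType_balUHP_le (hB : ∃ R₀ : ℝ, blaschkeTail μ R₀ ≠ ⊤) (hp : 1 ≤ p) :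
    growthType (fun r => balUHP μ {z : ℂ | ‖z‖ ≤ r}) p
      ≤ growthType (fun r => μ {z : ℂ | ‖z‖ ≤ r}) p := by
  set L := growthType (fun r => μ {z : ℂ | ‖z‖ ≤ r}) p
  rcases eq_or_ne L ⊤ with hL | hL
  · exact hL ▸ le_top
  have hpow : Tendsto (fun c : ℝ => c ^ p) (𝓝[>] 1) (𝓝 1) := by
    simpa using ((Real.continuousAt_rpow_const 1 p (Or.inl one_ne_zero)).tendsto).mono_left
      nhdsWithin_le_nhds
  have hlim : Tendsto (fun c : ℝ => ENNReal.ofReal (c ^ p) * L) (𝓝[>] 1) (𝓝 L) := by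
    simpa using ENNReal.Tendsto.mul_const (ENNReal.tendsto_ofReal hpow) (Or.inr hL)
  exact ge_of_tendsto hlim (eventually_mem_nhdsWithin.mono fun c hc =>
    growthType_balUHP_le_mul hB hp hc)

theorem growthType_balUHP_lt_top (hp : p < 1)
    (hμ : growthType (fun r => μ {z : ℂ | ‖z‖ ≤ r}) p < ⊤) :
    growthType (fun r => balUHP μ {z : ℂ | ‖z‖ ≤ r}) p < ⊤ := by
  obtain ⟨C, hμC, hC⟩ := exists_between hμ
  obtain ⟨r₁, hr₁⟩ := eventually_atTop.1 (eventually_le_of_growthType_lt hμC)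
  set A := C * ENNReal.ofReal (2 ^ p) * (1 - ENNReal.ofReal (2 ^ (p - 1)))⁻¹
  have hA : A ≠ ⊤ := by
    refine ENNReal.mul_ne_top (by finiteness) (ENNReal.inv_ne_top.2 (tsub_pos_of_lt ?_).ne')
    rw [← ENNReal.ofReal_one]
    exact (ENNReal.ofReal_lt_ofReal_iff zero_lt_one).2
      (Real.rpow_lt_one_of_one_lt_of_neg one_lt_two (by linarith))
  set H := fun s => ENNReal.ofReal (4 / Real.pi) * (ENNReal.ofReal s * blaschkeTail μ s)
  have hH : growthType H p ≤ ENNReal.ofReal (4 / Real.pi) * A := by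
    refine growthType_le_of_eventually_le ?_
    filter_upwards [eventually_ge_atTop (max r₁ 1)] with s hs
    have hs₀ : 0 < s := zero_lt_one.trans_le ((le_max_right _ _).trans hs)
    have hdyadic := ofReal_mul_setLIntegral_inv_norm_le (ν := μ) hs₀ fun t ht =>
      hr₁ t ((le_max_left _ _).trans (hs.trans ht))
    rw [mul_assoc]
    exact mul_le_mul_right
      ((mul_le_mul_right (blaschkeTail_le_setLIntegral_inv_norm μ s) _).trans hdyadic) _
  have hbal (r : ℝ) (hr : 0 < r) :
      balUHP μ {z : ℂ | ‖z‖ ≤ r} ≤ μ {z : ℂ | ‖z‖ ≤ 2 * r} + H (2 * r) := by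
    refine (balUHP_closedBall_le μ hr.le (by linarith : r < 2 * r)).trans_eq ?_
    simp only [H]
    rw [← mul_assoc, ← ENNReal.ofReal_mul (by positivity)]
    congr 3
    field_simp
    ring
  calc growthType (fun r => balUHP μ {z : ℂ | ‖z‖ ≤ r}) p
      ≤ growthType ((fun r => μ {z : ℂ | ‖z‖ ≤ 2 * r}) + fun r => H (2 * r)) p :=
        growthType_mono ((eventually_gt_atTop 0).mono hbal)
    _ ≤ ENNReal.ofReal (2 ^ p) * growthType (fun r => μ {z : ℂ | ‖z‖ ≤ r}) p
          + ENNReal.ofReal (2 ^ p) * (ENNReal.ofReal (4 / Real.pi) * A) :=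
        growthType_add_le.trans (add_le_add
          (growthType_comp_mul_le (F := fun s => μ {z : ℂ | ‖z‖ ≤ s}) two_pos)
          ((growthType_comp_mul_le (F := H) two_pos).trans (mul_le_mul_right hH _)))
    _ < ⊤ := by have := hμ.ne; finiteness

end Growth

theorem balUHP_radial_growth_general
    (μ : Measure ℂ)
    (hB : ∃ r₀ > (0 : ℝ),
      (∫⁻ z in {z : ℂ | 0 < z.im ∧ r₀ ≤ ‖z‖},
        ENNReal.ofReal (z.im / ‖z‖ ^ 2) ∂μ) < ⊤) :
    (∀ g : ℝ → ℝ, (∀ r : ℝ, 0 < r → r < g r) → ∀ r : ℝ, 0 < r →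
      balUHP μ {z : ℂ | ‖z‖ ≤ r}
        ≤ μ {z : ℂ | ‖z‖ ≤ g r}
          + ENNReal.ofReal (2 * r * (g r) ^ 2 / (Real.pi * (g r - r) ^ 2)) *
              ∫⁻ z in {z : ℂ | g r ≤ ‖z‖},
                ENNReal.ofReal (|z.im| / ‖z‖ ^ 2) ∂μ) ∧
    (∀ p : ℝ, 0 ≤ p →
      limsup (fun r : ℝ =>
          μ {z : ℂ | ‖z‖ ≤ r} / ENNReal.ofReal (r ^ p)) atTop < ⊤ →
      (limsup (fun r : ℝ =>
          balUHP μ {z : ℂ | ‖z‖ ≤ r} / ENNReal.ofReal (r ^ p)) atTop < ⊤ ∧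
        (1 ≤ p →
          limsup (fun r : ℝ =>
              balUHP μ {z : ℂ | ‖z‖ ≤ r} / ENNReal.ofReal (r ^ p)) atTop
            ≤ limsup (fun r : ℝ =>
              μ {z : ℂ | ‖z‖ ≤ r} / ENNReal.ofReal (r ^ p)) atTop))) := by
  obtain ⟨r₀, -, hr₀⟩ := hB
  have hTail : ∃ R₀ : ℝ, blaschkeTail μ R₀ ≠ ⊤ := ⟨r₀, hr₀.ne⟩
  refine ⟨fun g hg r hr => (balUHP_closedBall_le μ hr.le (hg r hr)).trans ?_, fun p _ hμ => ?_⟩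
  · gcongr
    exact blaschkeTail_le_setLIntegral_abs_im μ (g r)
  · rcases le_or_gt 1 p with hp | hp
    · exact ⟨(growthType_balUHP_le hTail hp).trans_lt hμ, fun _ => growthType_balUHP_le hTail hp⟩
    · exact ⟨growthType_balUHP_lt_top hp hμ, fun hp' => absurd hp' hp.not_ge⟩

/-- Proposition `cor:ges`: let `μ` satisfy the Blaschke condition near infinity in the
upper half-plane, with balayage `μ^bal`. (1) If `g(r) > r` for all `r > 0`, then
`μ^bal(D̄(r)) ≤ μ(D̄(g(r))) + (2r·g(r)²/(π(g(r)-r)²))·∫_{|z|≥g(r)} |Im z|/|z|² dμ(z)`.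
(2) If `μ` has finite type at order `p ≥ 0` near `∞`, then so has `μ^bal`; and when
`p ≥ 1` one has the sharp estimate
`limsup_{r→∞} μ^bal(D̄(r))/r^p ≤ limsup_{r→∞} μ(D̄(r))/r^p`. -/
theorem balUHP_radial_growth
    (μ : Measure ℂ) [IsFiniteMeasureOnCompacts μ]
    (hB : ∃ r₀ > (0 : ℝ),
      (∫⁻ z in {z : ℂ | 0 < z.im ∧ r₀ ≤ ‖z‖},
        ENNReal.ofReal (z.im / ‖z‖ ^ 2) ∂μ) < ⊤) :
    (∀ g : ℝ → ℝ, (∀ r : ℝ, 0 < r → r < g r) → ∀ r : ℝ, 0 < r →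
      balUHP μ {z : ℂ | ‖z‖ ≤ r}
        ≤ μ {z : ℂ | ‖z‖ ≤ g r}
          + ENNReal.ofReal (2 * r * (g r) ^ 2 / (Real.pi * (g r - r) ^ 2)) *
              ∫⁻ z in {z : ℂ | g r ≤ ‖z‖},
                ENNReal.ofReal (|z.im| / ‖z‖ ^ 2) ∂μ) ∧
    (∀ p : ℝ, 0 ≤ p →
      limsup (fun r : ℝ =>
          μ {z : ℂ | ‖z‖ ≤ r} / ENNReal.ofReal (r ^ p)) atTop < ⊤ →
      (limsup (fun r : ℝ =>
          balUHP μ {z : ℂ | ‖z‖ ≤ r} / ENNReal.ofReal (r ^ p)) atTop < ⊤ ∧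
        (1 ≤ p →
          limsup (fun r : ℝ =>
              balUHP μ {z : ℂ | ‖z‖ ≤ r} / ENNReal.ofReal (r ^ p)) atTop
            ≤ limsup (fun r : ℝ =>
              μ {z : ℂ | ‖z‖ ≤ r} / ENNReal.ofReal (r ^ p)) atTop))) :=
  balUHP_radial_growth_general μ hB
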